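/- Let n ≥ 1 and p > 1 be given, and let u : EuclideanSpace ℝ (Fin n) → ℝ be a smooth nonnegative function such that Δu(x) ≥ 0 for all x and ∫ u(x)^p dx < ∞ (with respect to the Lebesgue measure). Then u is constant. -/

import Mathlib

open MeasureTheory Metric Set Function


/-- The Laplacian of `f : ℝⁿ → ℝ` at `x`: the sum of the second partial derivatives in the
standard orthonormal coordinate directions (the trace of the second derivative). -/
noncomputable def laplacian {n : ℕ} (f : EuclideanSpace ℝ (Fin n) → ℝ)
    (x : EuclideanSpace ℝ (Fin n)) : ℝ :=
  ∑ i : Fin n, fderiv ℝ (fun y => fderiv ℝ f y (EuclideanSpace.single i 1)) x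
    (EuclideanSpace.single i 1)

/-- Partial derivative in the `i`-th coordinate direction. -/
noncomputable def pderiv {n : ℕ} (f : EuclideanSpace ℝ (Fin n) → ℝ) (i : Fin n)
    (x : EuclideanSpace ℝ (Fin n)) : ℝ :=
  fderiv ℝ f x (EuclideanSpace.single i 1)

/-- Sum of squares of the partial derivatives. -/
noncomputable def gradSq {n : ℕ} (f : EuclideanSpace ℝ (Fin n) → ℝ)
    (x : EuclideanSpace ℝ (Fin n)) : ℝ :=
  ∑ i : Fin n, (pderiv f i x) ^ 2

lemma contDiff_pderiv {n : ℕ} {f : EuclideanSpace ℝ (Fin n) → ℝ} (hf : ContDiff ℝ (⊤:ℕ∞) f)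
    (i : Fin n) : ContDiff ℝ (⊤:ℕ∞) (pderiv f i) :=
  (hf.fderiv_right (m := (⊤:ℕ∞)) (by simp)).clm_apply contDiff_const

lemma laplacian_eq {n : ℕ} (f : EuclideanSpace ℝ (Fin n) → ℝ) (x : EuclideanSpace ℝ (Fin n)) :
    laplacian f x = ∑ i : Fin n, fderiv ℝ (pderiv f i) x (EuclideanSpace.single i 1) := rfl

lemma young_aux {a b t : ℝ} (ht : 0 < t) : 2 * a * b ≤ t * a ^ 2 + b ^ 2 / t := by
  rw [div_eq_mul_inv, ← sub_nonneg]
  have ht' : t * t⁻¹ = 1 := mul_inv_cancel₀ ht.ne'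
  nlinarith [sq_nonneg (t * a - b), mul_nonneg (sq_nonneg (t * a - b)) (inv_pos.mpr ht).le]

set_option maxHeartbeats 1000000 in
lemma caccioppoli {n : ℕ} {p : ℝ} (hp : 1 < p) {u : EuclideanSpace ℝ (Fin n) → ℝ}
    (hu : ContDiff ℝ (⊤:ℕ∞) u) (hupos : ∀ x, 0 ≤ u x) (hsub : ∀ x, 0 ≤ laplacian u x)
    (φ : EuclideanSpace ℝ (Fin n) → ℝ) (hφ : ContDiff ℝ (⊤:ℕ∞) φ) (hφc : HasCompactSupport φ)
    {ε : ℝ} (hε : 0 < ε) :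
    ∫ x, (φ x) ^ 2 * ((p - 1) * (u x + ε) ^ (p - 2) * gradSq u x)
      ≤ (4 / (p - 1)) * ∫ x, gradSq φ x * (u x + ε) ^ p := by
  classical
  have hp1 : (0:ℝ) < p - 1 := by linarith
  have du : Differentiable ℝ u := hu.differentiable (by simp)
  have dφ : Differentiable ℝ φ := hφ.differentiable (by simp)
  have cu : Continuous u := hu.continuous
  have cφ : Continuous φ := hφ.continuous
  have hwpos : ∀ x, 0 < u x + ε := fun x => by have := hupos x; linarith
  set P : EuclideanSpace ℝ (Fin n) → ℝ :=
    fun x => (φ x) ^ 2 * ((p - 1) * (u x + ε) ^ (p - 2) * gradSq u x) with hP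
  set G : EuclideanSpace ℝ (Fin n) → ℝ := fun x => gradSq φ x * (u x + ε) ^ p with hG
  set F : EuclideanSpace ℝ (Fin n) → ℝ := fun x => (u x + ε) ^ (p - 1) - ε ^ (p - 1) with hF
  set f : EuclideanSpace ℝ (Fin n) → ℝ := fun x => (φ x) ^ 2 * F x with hf
  set Q : EuclideanSpace ℝ (Fin n) → ℝ :=
    fun x => 2 * φ x * F x * ∑ i : Fin n, pderiv φ i x * pderiv u i x with hQ
  -- continuity facts
  have cDu : ∀ i, Continuous (pderiv u i) := fun i => (contDiff_pderiv hu i).continuous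
  have cDφ : ∀ i, Continuous (pderiv φ i) := fun i => (contDiff_pderiv hφ i).continuous
  have cw : Continuous (fun x => u x + ε) := cu.add continuous_const
  have cwp : ∀ q : ℝ, Continuous fun x => (u x + ε) ^ q := fun q =>
    cw.rpow_const (fun x => Or.inl (hwpos x).ne')
  have cF : Continuous F := (cwp (p - 1)).sub continuous_const
  have cf : Continuous f := (cφ.pow 2).mul cF
  have cSu : Continuous (gradSq u) := continuous_finset_sum _ fun i _ => (cDu i).pow 2
  have cSφ : Continuous (gradSq φ) := continuous_finset_sum _ fun i _ => (cDφ i).pow 2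
  have cP : Continuous P := (cφ.pow 2).mul ((continuous_const.mul (cwp (p - 2))).mul cSu)
  have cQ : Continuous Q :=
    (((continuous_const.mul cφ).mul cF)).mul
      (continuous_finset_sum _ fun i _ => (cDφ i).mul (cDu i))
  have cG : Continuous G := cSφ.mul (cwp p)
  -- vanishing facts off the support of φ
  have hφ0 : ∀ x, x ∉ tsupport φ → φ x = 0 := fun x hx => image_eq_zero_of_notMem_tsupport hx
  have hDφ0 : ∀ (i) (x), x ∉ tsupport φ → pderiv φ i x = 0 := by
    intro i x hx
    have h1 : x ∉ support (fderiv ℝ φ) := fun hmem => hx (support_fderiv_subset ℝ hmem)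
    have h2 : fderiv ℝ φ x = 0 := Function.notMem_support.mp h1
    simp [pderiv, h2]
  have mkInt : ∀ h : EuclideanSpace ℝ (Fin n) → ℝ, Continuous h →
      (∀ x, x ∉ tsupport φ → h x = 0) → Integrable h := fun h hc h0 =>
    hc.integrable_of_hasCompactSupport (HasCompactSupport.intro hφc h0)
  have intP : Integrable P := mkInt P cP (fun x hx => by simp [hP, hφ0 x hx])
  have intQ : Integrable Q := mkInt Q cQ (fun x hx => by simp [hQ, hφ0 x hx])
  have intG : Integrable G := by
    refine mkInt G cG (fun x hx => ?_)
    have : gradSq φ x = 0 := Finset.sum_eq_zero fun i _ => by rw [hDφ0 i x hx]; ring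
    simp [hG, this]
  -- nonnegativity of F
  have hFnn : ∀ x, 0 ≤ F x := by
    intro x
    have : ε ^ (p - 1) ≤ (u x + ε) ^ (p - 1) :=
      Real.rpow_le_rpow hε.le (by have := hupos x; linarith) hp1.le
    simp only [hF]; linarith
  -- the derivative of f
  have hasF : ∀ x, HasFDerivAt f
      ((φ x ^ 2) • (((p - 1) * (u x + ε) ^ (p - 2)) • fderiv ℝ u x)
        + F x • ((2 * φ x) • fderiv ℝ φ x)) x := by
    intro x
    have hφx : HasFDerivAt φ (fderiv ℝ φ x) x := (dφ x).hasFDerivAt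
    have hux : HasFDerivAt u (fderiv ℝ u x) x := (du x).hasFDerivAt
    have h1 : HasFDerivAt (fun y => φ y ^ 2) ((2 * φ x) • fderiv ℝ φ x) x := by
      have h := hφx.mul hφx
      rw [show (φ * φ) = fun y => φ y ^ 2 from funext fun y => (sq (φ y)).symm] at h
      rw [two_mul, add_smul]
      exact h
    have h2 : HasFDerivAt (fun y => (u y + ε) ^ (p - 1))
        (((p - 1) * (u x + ε) ^ (p - 2)) • fderiv ℝ u x) x := by
      have h := (hux.add_const ε).rpow_const (p := p - 1) (Or.inl (hwpos x).ne')
      have hee : p - 1 - 1 = p - 2 := by ring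
      rwa [hee] at h
    have h3 : HasFDerivAt F (((p - 1) * (u x + ε) ^ (p - 2)) • fderiv ℝ u x) x := by
      rw [hF]; exact h2.sub_const _
    rw [hf]
    exact h1.mul h3
  have df : Differentiable ℝ f := fun x => (hasF x).differentiableAt
  have fderiv_f : ∀ x i, fderiv ℝ f x (EuclideanSpace.single i 1)
      = φ x ^ 2 * ((p - 1) * (u x + ε) ^ (p - 2) * pderiv u i x)
        + F x * (2 * φ x * pderiv φ i x) := by
    intro x i
    rw [(hasF x).fderiv]
    simp only [ContinuousLinearMap.add_apply, ContinuousLinearMap.smul_apply, smul_eq_mul,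
      pderiv]
  have cfd : ∀ i, Continuous fun x => fderiv ℝ f x (EuclideanSpace.single i 1) := by
    intro i
    have heq : (fun x => fderiv ℝ f x (EuclideanSpace.single i 1))
        = fun x => φ x ^ 2 * ((p - 1) * (u x + ε) ^ (p - 2) * pderiv u i x)
            + F x * (2 * φ x * pderiv φ i x) := funext fun x => fderiv_f x i
    rw [heq]
    exact ((cφ.pow 2).mul ((continuous_const.mul (cwp (p - 2))).mul (cDu i))).add
      (cF.mul ((continuous_const.mul cφ).mul (cDφ i)))
  have dg : ∀ i, Differentiable ℝ (pderiv u i) :=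
    fun i => (contDiff_pderiv hu i).differentiable (by simp)
  have cg2 : ∀ i : Fin n, Continuous fun x =>
      fderiv ℝ (pderiv u i) x (EuclideanSpace.single i 1) := fun i =>
    (((contDiff_pderiv hu i).fderiv_right (m := (⊤:ℕ∞)) (by simp)).continuous).clm_apply continuous_const
  have intfi : ∀ i : Fin n, Integrable fun x =>
      f x * fderiv ℝ (pderiv u i) x (EuclideanSpace.single i 1) := fun i =>
    mkInt _ (cf.mul (cg2 i)) (fun x hx => by simp [hf, hφ0 x hx])
  have intdfg : ∀ i : Fin n, Integrable fun x =>
      fderiv ℝ f x (EuclideanSpace.single i 1) * pderiv u i x := fun i =>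
    mkInt _ ((cfd i).mul (cDu i))
      (fun x hx => by rw [fderiv_f x i, hφ0 x hx]; ring)
  have ibp : ∀ i : Fin n, ∫ x, f x * fderiv ℝ (pderiv u i) x (EuclideanSpace.single i 1)
      = - ∫ x, fderiv ℝ f x (EuclideanSpace.single i 1) * pderiv u i x := by
    intro i
    refine integral_mul_fderiv_eq_neg_fderiv_mul_of_integrable (intdfg i) (intfi i) ?_ (fun x _ => df x) (fun x _ => dg i x)
    exact mkInt _ (cf.mul (cDu i)) (fun x hx => by simp [hf, hφ0 x hx])
  -- summing up
  have sum_eq : ∀ x, (∑ i : Fin n, fderiv ℝ f x (EuclideanSpace.single i 1) * pderiv u i x)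
      = P x + Q x := by
    intro x
    calc (∑ i : Fin n, fderiv ℝ f x (EuclideanSpace.single i 1) * pderiv u i x)
        = ∑ i : Fin n, (φ x ^ 2 * ((p - 1) * (u x + ε) ^ (p - 2)) * (pderiv u i x) ^ 2
            + (2 * φ x * F x) * (pderiv φ i x * pderiv u i x)) :=
          Finset.sum_congr rfl fun i _ => by rw [fderiv_f x i]; ring
      _ = φ x ^ 2 * ((p - 1) * (u x + ε) ^ (p - 2)) * (∑ i : Fin n, (pderiv u i x) ^ 2)
            + (2 * φ x * F x) * ∑ i : Fin n, pderiv φ i x * pderiv u i x := by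
          rw [Finset.sum_add_distrib, Finset.mul_sum, Finset.mul_sum]
      _ = P x + Q x := by simp only [hP, hQ, gradSq]; ring
  have hIeq : ∫ x, f x * laplacian u x = - ((∫ x, P x) + ∫ x, Q x) := by
    have e1 : (fun x => f x * laplacian u x)
        = fun x => ∑ i : Fin n, f x * fderiv ℝ (pderiv u i) x (EuclideanSpace.single i 1) :=
      funext fun x => by rw [laplacian_eq, Finset.mul_sum]
    rw [e1, integral_finset_sum _ (fun i _ => intfi i)]
    rw [Finset.sum_congr rfl fun i _ => ibp i, Finset.sum_neg_distrib,
      ← integral_finset_sum _ (fun i _ => intdfg i)]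
    congr 1
    rw [← integral_add intP intQ]
    exact integral_congr_ae (Filter.Eventually.of_forall fun x => sum_eq x)
  have hnn : 0 ≤ ∫ x, f x * laplacian u x :=
    integral_nonneg fun x => mul_nonneg (mul_nonneg (sq_nonneg _) (hFnn x)) (hsub x)
  have hPQ : (∫ x, P x) ≤ - ∫ x, Q x := by
    rw [hIeq] at hnn; linarith
  -- pointwise bound on Q
  have hQbound : ∀ x, - Q x ≤ (1/2) * P x + (2 / (p - 1)) * G x := by
    intro x
    have hsφ : 0 ≤ gradSq φ x := Finset.sum_nonneg fun i _ => sq_nonneg _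
    have hsu : 0 ≤ gradSq u x := Finset.sum_nonneg fun i _ => sq_nonneg _
    have hW2 : 0 < (u x + ε) ^ (p - 2) := Real.rpow_pos_of_pos (hwpos x) _
    have hWp : 0 < (u x + ε) ^ p := Real.rpow_pos_of_pos (hwpos x) _
    have hFx : 0 ≤ F x := hFnn x
    have hCS : (∑ i : Fin n, pderiv φ i x * pderiv u i x) ^ 2 ≤ gradSq φ x * gradSq u x := by
      simpa [gradSq] using
        Finset.sum_mul_sq_le_sq_mul_sq Finset.univ (fun i => pderiv φ i x)
          (fun i => pderiv u i x)
    have habs : |∑ i : Fin n, pderiv φ i x * pderiv u i x|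
        ≤ Real.sqrt (gradSq φ x) * Real.sqrt (gradSq u x) := by
      rw [← Real.sqrt_mul hsφ, ← Real.sqrt_sq_eq_abs]
      exact Real.sqrt_le_sqrt hCS
    set t : ℝ := (p - 1) * (u x + ε) ^ (p - 2) / 2 with hT
    have ht : 0 < t := by positivity
    have hy := young_aux (a := |φ x| * Real.sqrt (gradSq u x))
      (b := F x * Real.sqrt (gradSq φ x)) ht
    have hQle : - Q x ≤ 2 * (|φ x| * Real.sqrt (gradSq u x)) * (F x * Real.sqrt (gradSq φ x)) := by
      have h1 : - Q x ≤ |Q x| := neg_le_abs _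
      refine h1.trans ?_
      have h2 : |Q x| = 2 * |φ x| * F x * |∑ i : Fin n, pderiv φ i x * pderiv u i x| := by
        rw [hQ]
        rw [abs_mul, abs_mul, abs_mul]
        rw [abs_of_nonneg (by norm_num : (0:ℝ) ≤ 2), abs_of_nonneg hFx]
      rw [h2]
      calc 2 * |φ x| * F x * |∑ i : Fin n, pderiv φ i x * pderiv u i x|
          ≤ 2 * |φ x| * F x * (Real.sqrt (gradSq φ x) * Real.sqrt (gradSq u x)) := by
            apply mul_le_mul_of_nonneg_left habs
            positivity
        _ = 2 * (|φ x| * Real.sqrt (gradSq u x)) * (F x * Real.sqrt (gradSq φ x)) := by ring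
    have hA2 : (|φ x| * Real.sqrt (gradSq u x)) ^ 2 = φ x ^ 2 * gradSq u x := by
      rw [mul_pow, sq_abs, Real.sq_sqrt hsu]
    have hB2 : (F x * Real.sqrt (gradSq φ x)) ^ 2 = F x ^ 2 * gradSq φ x := by
      rw [mul_pow, Real.sq_sqrt hsφ]
    have hterm1 : t * (|φ x| * Real.sqrt (gradSq u x)) ^ 2 = (1/2) * P x := by
      rw [hA2, hT, hP]; ring
    have hterm2 : (F x * Real.sqrt (gradSq φ x)) ^ 2 / t ≤ (2 / (p - 1)) * G x := by
      rw [hB2]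
      have hF2 : F x ^ 2 ≤ (u x + ε) ^ p * (u x + ε) ^ (p - 2) := by
        have h1 : F x ≤ (u x + ε) ^ (p - 1) := by
          simp only [hF]
          have : 0 ≤ ε ^ (p - 1) := Real.rpow_nonneg hε.le _
          linarith
        calc F x ^ 2 ≤ ((u x + ε) ^ (p - 1)) ^ 2 := by nlinarith
          _ = (u x + ε) ^ ((p - 1) + (p - 1)) := by
              rw [Real.rpow_add (hwpos x), sq]
          _ = (u x + ε) ^ (p + (p - 2)) := by norm_num; ring_nf
          _ = (u x + ε) ^ p * (u x + ε) ^ (p - 2) := Real.rpow_add (hwpos x) _ _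
      rw [div_le_iff₀ ht, hT, hG]
      have key : 2 / (p - 1) * (gradSq φ x * (u x + ε) ^ p) * ((p - 1) * (u x + ε) ^ (p - 2) / 2)
          = gradSq φ x * ((u x + ε) ^ p * (u x + ε) ^ (p - 2)) := by
        field_simp
      rw [key]
      nlinarith [mul_le_mul_of_nonneg_left hF2 hsφ]
    calc - Q x ≤ 2 * (|φ x| * Real.sqrt (gradSq u x)) * (F x * Real.sqrt (gradSq φ x)) := hQle
      _ ≤ t * (|φ x| * Real.sqrt (gradSq u x)) ^ 2
            + (F x * Real.sqrt (gradSq φ x)) ^ 2 / t := hy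
      _ ≤ (1/2) * P x + (2 / (p - 1)) * G x := by
          rw [hterm1]; linarith [hterm2]
  -- put it together
  have hmono : - (∫ x, Q x) ≤ (1/2) * (∫ x, P x) + (2 / (p - 1)) * ∫ x, G x := by
    have h1 : (∫ x, - Q x) ≤ ∫ x, ((1/2) * P x + (2 / (p - 1)) * G x) :=
      integral_mono intQ.neg ((intP.const_mul _).add (intG.const_mul _)) hQbound
    rwa [integral_neg, integral_add (intP.const_mul _) (intG.const_mul _),
      integral_const_mul, integral_const_mul] at h1
  have hGnn : 0 ≤ ∫ x, G x := integral_nonneg fun x => by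
    have : 0 ≤ (u x + ε) ^ p := Real.rpow_nonneg (hwpos x).le _
    have hsφ : 0 ≤ gradSq φ x := Finset.sum_nonneg fun i _ => sq_nonneg _
    simp only [hG]; positivity
  have : (∫ x, P x) ≤ (1/2) * (∫ x, P x) + (2 / (p - 1)) * ∫ x, G x := le_trans hPQ hmono
  have h4 : (4 / (p - 1)) * (∫ x, G x) = 2 * ((2 / (p - 1)) * ∫ x, G x) := by ring
  show (∫ x, P x) ≤ (4 / (p - 1)) * ∫ x, G x
  linarith

lemma euclidean_eq_sum_single {n : ℕ} (y : EuclideanSpace ℝ (Fin n)) :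
    y = ∑ i : Fin n, y i • EuclideanSpace.single i (1 : ℝ) := by
  ext j
  have h := Finset.sum_apply (a := j)
    (g := fun i : Fin n => (y i • EuclideanSpace.single i (1:ℝ) : EuclideanSpace ℝ (Fin n)))
    (s := Finset.univ)
  rw [WithLp.ofLp_sum, h]
  simp [EuclideanSpace.single_apply, PiLp.smul_apply]

lemma min_rpow_le {a b t q : ℝ} (ha : 0 < a) (hat : a ≤ t) (htb : t ≤ b) :
    min (a ^ q) (b ^ q) ≤ t ^ q := by
  rcases le_or_gt 0 q with hq | hq
  · exact le_trans (min_le_left _ _) (Real.rpow_le_rpow ha.le hat hq)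
  · exact le_trans (min_le_right _ _) (Real.rpow_le_rpow_of_nonpos (ha.trans_le hat) htb hq.le)

lemma add_rpow_le {a b p : ℝ} (ha : 0 ≤ a) (hb : 0 ≤ b) (hp : 0 ≤ p) :
    (a + b) ^ p ≤ 2 ^ p * (a ^ p + b ^ p) := by
  have h1 : a + b ≤ 2 * max a b := by
    rcases le_total a b with h | h
    · simp [max_eq_right h]; linarith
    · simp [max_eq_left h]; linarith
  have h2 : (a + b) ^ p ≤ (2 * max a b) ^ p :=
    Real.rpow_le_rpow (by positivity) h1 hp
  refine h2.trans ?_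
  rw [Real.mul_rpow (by norm_num) (le_max_of_le_left ha)]
  gcongr
  rcases le_total a b with h | h
  · rw [max_eq_right h]
    nlinarith [Real.rpow_nonneg ha p, Real.rpow_nonneg hb p]
  · rw [max_eq_left h]
    nlinarith [Real.rpow_nonneg ha p, Real.rpow_nonneg hb p]



set_option maxHeartbeats 1000000 in
/-- Yau's `L^p`-Liouville theorem, Euclidean case (`p > 1`): a smooth nonnegative
subharmonic function on `ℝⁿ` with `∫ u^p < ∞` is constant. -/
theorem lp_liouville_subharmonic (n : ℕ) (hn : 1 ≤ n) (p : ℝ) (hp : 1 < p)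
    (u : EuclideanSpace ℝ (Fin n) → ℝ)
    (hu : ContDiff ℝ (⊤ : ℕ∞) u) (hupos : ∀ x, 0 ≤ u x)
    (hsub : ∀ x, 0 ≤ laplacian u x)
    (hLp : MeasureTheory.Integrable (fun x => u x ^ p)) :
    ∃ c : ℝ, ∀ x, u x = c := by
  classical
  have hu' : ContDiff ℝ (⊤:ℕ∞) u := hu.of_le (by simp)
  have hp1 : (0:ℝ) < p - 1 := by linarith
  suffices hgrad : ∀ (x : EuclideanSpace ℝ (Fin n)) (i : Fin n), pderiv u i x = 0 by
    have hfz : ∀ x, fderiv ℝ u x = 0 := by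
      intro x
      apply ContinuousLinearMap.ext
      intro y
      have hyy : fderiv ℝ u x y = ∑ i : Fin n, y i * pderiv u i x := by
        conv_lhs => rw [euclidean_eq_sum_single y]
        rw [map_sum]
        exact Finset.sum_congr rfl fun i _ => by
          rw [_root_.map_smul]; simp [pderiv, smul_eq_mul]
      simp [hyy, hgrad]
    exact ⟨u 0, fun x => is_const_of_fderiv_eq_zero (hu.differentiable (by simp)) hfz x 0⟩
  by_contra hcon
  push_neg at hcon
  obtain ⟨x₀, i, hx₀⟩ := hcon
  -- the bump function
  set χ : ContDiffBump (0 : EuclideanSpace ℝ (Fin n)) := ⟨1, 2, one_pos, one_lt_two⟩ with hχ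
  have χcd : ContDiff ℝ (⊤:ℕ∞) (χ : EuclideanSpace ℝ (Fin n) → ℝ) := χ.contDiff
  obtain ⟨C, hC⟩ := ((χ.hasCompactSupport).fderiv (𝕜 := ℝ)).exists_bound_of_continuous
    ((χcd.fderiv_right (m := (⊤:ℕ∞)) (by simp)).continuous)
  have hC0 : 0 ≤ C := le_trans (norm_nonneg _) (hC 0)
  -- positivity of u at x₀
  have hu0 : 0 < u x₀ := by
    rcases (hupos x₀).lt_or_eq with h | h
    · exact h
    · exfalso
      apply hx₀
      have hmin : IsLocalMin u x₀ :=
        Filter.Eventually.of_forall fun y => by rw [← h]; exact hupos y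
      have hfz := hmin.fderiv_eq_zero
      simp [pderiv, hfz]
  -- a small ball around x₀ where things are bounded
  have hcu := hu.continuous.continuousAt (x := x₀)
  have hcD := (contDiff_pderiv hu' i).continuous.continuousAt (x := x₀)
  rw [Metric.continuousAt_iff] at hcu hcD
  obtain ⟨δ₁, hδ₁, h1⟩ := hcu (u x₀ / 2) (by linarith)
  obtain ⟨δ₂, hδ₂, h2⟩ := hcD (|pderiv u i x₀| / 2) (by positivity)
  set r : ℝ := min δ₁ δ₂ with hrdef
  have hr : 0 < r := lt_min hδ₁ hδ₂
  set a : ℝ := u x₀ / 2 with ha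
  set b : ℝ := 3/2 * u x₀ + 1 with hb
  set d : ℝ := (|pderiv u i x₀| / 2)^2 with hd
  set m : ℝ := min (a ^ (p-2)) (b ^ (p-2)) with hm
  have ha0 : 0 < a := by rw [ha]; linarith
  have hb0 : 0 < b := by rw [hb]; linarith
  have hd0 : 0 < d := by rw [hd]; positivity
  have hm0 : 0 < m := lt_min (Real.rpow_pos_of_pos ha0 _) (Real.rpow_pos_of_pos hb0 _)
  set c₀ : ℝ := (p - 1) * m * d with hc₀def
  have hc₀ : 0 < c₀ := by positivity
  set V : ℝ := (volume (ball x₀ r)).toReal with hV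
  have hV0 : 0 < V := by
    rw [hV]
    exact ENNReal.toReal_pos (measure_ball_pos volume x₀ hr).ne' measure_ball_lt_top.ne
  -- global constants
  set I : ℝ := ∫ x, u x ^ p with hI
  have hI0 : 0 ≤ I := integral_nonneg fun x => Real.rpow_nonneg (hupos x) p
  set V₁ : ℝ := (volume (ball (0 : EuclideanSpace ℝ (Fin n)) 1)).toReal with hV₁
  have hV₁0 : 0 ≤ V₁ := ENNReal.toReal_nonneg
  set A : ℝ := (n : ℝ) * C^2 * 2^(p:ℝ) with hA
  have hA0 : 0 ≤ A := by
    rw [hA]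
    have : (0:ℝ) < 2 ^ (p:ℝ) := Real.rpow_pos_of_pos two_pos _
    positivity
  set K : ℝ := (4 / (p-1)) * (A * (I + 2^n * V₁)) with hK
  have hK0 : 0 ≤ K := by
    rw [hK]; positivity
  -- the main estimate for every large radius
  have main : ∀ R : ℝ, 1 ≤ R → ‖x₀‖ + r ≤ R → c₀ * V ≤ K * R⁻¹ := by
    intro R hR1 hRx
    have hR0 : 0 < R := lt_of_lt_of_le one_pos hR1
    set ρ : ℝ := R⁻¹ with hρ
    have hρ0 : 0 < ρ := inv_pos.mpr hR0
    have hρ1 : ρ ≤ 1 := by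
      rw [hρ]
      exact inv_le_one_of_one_le₀ hR1
    set ε : ℝ := ρ ^ (n+1) with hεdef
    have hε : 0 < ε := by positivity
    have hε1 : ε ≤ 1 := by
      rw [hεdef]
      exact pow_le_one₀ hρ0.le hρ1
    set φ : EuclideanSpace ℝ (Fin n) → ℝ := fun x => χ (R⁻¹ • x) with hφdef
    have hφcd : ContDiff ℝ (⊤:ℕ∞) φ := χcd.comp (contDiff_const_smul _)
    have hφc : HasCompactSupport φ := χ.hasCompactSupport.comp_smul (inv_ne_zero hR0.ne')
    -- derivative bound for φ
    have hφder : ∀ x, HasFDerivAt φ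
        (R⁻¹ • fderiv ℝ (χ : EuclideanSpace ℝ (Fin n) → ℝ) (R⁻¹ • x)) x := by
      intro x
      have hχd : HasFDerivAt (χ : EuclideanSpace ℝ (Fin n) → ℝ)
          (fderiv ℝ (χ : EuclideanSpace ℝ (Fin n) → ℝ) (R⁻¹ • x)) (R⁻¹ • x) :=
        ((χcd.differentiable (by simp)) _).hasFDerivAt
      have hlin : HasFDerivAt (fun y : EuclideanSpace ℝ (Fin n) => R⁻¹ • y)
          (R⁻¹ • ContinuousLinearMap.id ℝ (EuclideanSpace ℝ (Fin n))) x :=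
        (hasFDerivAt_id x).const_smul R⁻¹
      have hcomp := hχd.comp x hlin
      have heq : R⁻¹ • fderiv ℝ (χ : EuclideanSpace ℝ (Fin n) → ℝ) (R⁻¹ • x)
          = (fderiv ℝ (χ : EuclideanSpace ℝ (Fin n) → ℝ) (R⁻¹ • x)).comp
            (R⁻¹ • ContinuousLinearMap.id ℝ (EuclideanSpace ℝ (Fin n))) := by
        ext y
        simp
      rw [heq]
      exact hcomp
    have hDφ : ∀ (j : Fin n) (x), |pderiv φ j x| ≤ C * ρ := by
      intro j x
      rw [pderiv, (hφder x).fderiv]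
      have h1' : |(R⁻¹ • fderiv ℝ (χ : EuclideanSpace ℝ (Fin n) → ℝ) (R⁻¹ • x))
          (EuclideanSpace.single j 1)|
          = ρ * ‖fderiv ℝ (χ : EuclideanSpace ℝ (Fin n) → ℝ) (R⁻¹ • x)
              (EuclideanSpace.single j (1:ℝ))‖ := by
        rw [ContinuousLinearMap.smul_apply, smul_eq_mul, abs_mul, abs_inv,
          abs_of_pos hR0, Real.norm_eq_abs, hρ]
      rw [h1']
      have h2' : ‖fderiv ℝ (χ : EuclideanSpace ℝ (Fin n) → ℝ) (R⁻¹ • x)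
          (EuclideanSpace.single j (1:ℝ))‖
          ≤ ‖fderiv ℝ (χ : EuclideanSpace ℝ (Fin n) → ℝ) (R⁻¹ • x)‖ := by
        have := (fderiv ℝ (χ : EuclideanSpace ℝ (Fin n) → ℝ) (R⁻¹ • x)).le_opNorm
          (EuclideanSpace.single j (1:ℝ))
        rwa [EuclideanSpace.norm_single, norm_one, mul_one] at this
      calc ρ * ‖fderiv ℝ (χ : EuclideanSpace ℝ (Fin n) → ℝ) (R⁻¹ • x)
            (EuclideanSpace.single j (1:ℝ))‖
          ≤ ρ * C := by
            apply mul_le_mul_of_nonneg_left (h2'.trans (hC _)) hρ0.le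
        _ = C * ρ := mul_comm _ _
    have hSφ : ∀ x, gradSq φ x ≤ (n : ℝ) * (C * ρ)^2 := by
      intro x
      have : gradSq φ x ≤ ∑ _j : Fin n, (C * ρ)^2 := by
        apply Finset.sum_le_sum
        intro j _
        have hj := hDφ j x
        rw [← sq_abs]
        exact pow_le_pow_left₀ (abs_nonneg _) hj 2
      simpa using this
    -- support of the gradient of φ
    have hsupp : ∀ x, x ∉ closedBall (0 : EuclideanSpace ℝ (Fin n)) (2*R) → gradSq φ x = 0 := by
      intro x hx
      have hxt : x ∉ tsupport φ := by
        intro hmem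
        apply hx
        have hsub' : tsupport φ ⊆ closedBall (0 : EuclideanSpace ℝ (Fin n)) (2*R) := by
          apply closure_minimal _ isClosed_closedBall
          intro z hz
          have hz' : (R⁻¹ • z) ∈ support (χ : EuclideanSpace ℝ (Fin n) → ℝ) := hz
          rw [χ.support_eq] at hz'
          have : ‖R⁻¹ • z‖ < 2 := by simpa [dist_eq_norm] using hz'
          rw [norm_smul, norm_inv, Real.norm_eq_abs, abs_of_pos hR0] at this
          have : ‖z‖ ≤ 2 * R := by
            rw [inv_mul_lt_iff₀ hR0] at this
            linarith
          simpa [dist_eq_norm] using this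
        exact hsub' hmem
      apply Finset.sum_eq_zero
      intro j _
      have hfz : fderiv ℝ φ x = 0 :=
        Function.notMem_support.mp (fun hmem => hxt (support_fderiv_subset ℝ hmem))
      simp [pderiv, hfz]
    -- Caccioppoli inequality
    have hcac := caccioppoli hp hu' hupos hsub φ hφcd hφc hε
    -- bound the right-hand side
    have cw : Continuous (fun x => u x + ε) := hu.continuous.add continuous_const
    have hwpos : ∀ x, 0 < u x + ε := fun x => by have := hupos x; linarith
    have cwp : Continuous fun x => (u x + ε) ^ (p:ℝ) :=
      cw.rpow_const (fun x => Or.inl (hwpos x).ne')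
    have cSφ : Continuous (gradSq φ) := continuous_finset_sum _ fun j _ =>
      ((contDiff_pderiv hφcd j).continuous).pow 2
    have intG : Integrable (fun x => gradSq φ x * (u x + ε) ^ (p:ℝ)) := by
      apply (cSφ.mul cwp).integrable_of_hasCompactSupport
      apply HasCompactSupport.intro (isCompact_closedBall (0 : EuclideanSpace ℝ (Fin n)) (2*R))
      intro x hx
      rw [Pi.mul_apply, hsupp x hx, zero_mul]
    have hεp : ε ^ (p:ℝ) ≤ ε := by
      have := Real.rpow_le_rpow_of_exponent_ge hε hε1 (le_of_lt hp)
      rwa [Real.rpow_one] at this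
    set c1 : ℝ := (n : ℝ) * (C * ρ)^2 * 2^(p:ℝ) with hc1
    have hc10 : 0 ≤ c1 := by
      rw [hc1]
      have : (0:ℝ) < 2 ^ (p:ℝ) := Real.rpow_pos_of_pos two_pos _
      positivity
    have hpt : ∀ x, gradSq φ x * (u x + ε)^(p:ℝ)
        ≤ c1 * u x ^ (p:ℝ)
          + Set.indicator (closedBall (0 : EuclideanSpace ℝ (Fin n)) (2*R))
              (fun _ => c1 * ε) x := by
      intro x
      have hsφnn : 0 ≤ gradSq φ x := Finset.sum_nonneg fun j _ => sq_nonneg _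
      by_cases hx : x ∈ closedBall (0 : EuclideanSpace ℝ (Fin n)) (2*R)
      · rw [Set.indicator_of_mem hx]
        have hb1 : (u x + ε)^(p:ℝ) ≤ 2^(p:ℝ) * (u x ^(p:ℝ) + ε^(p:ℝ)) :=
          add_rpow_le (hupos x) hε.le (by linarith)
        have hb2 : gradSq φ x * (u x + ε)^(p:ℝ)
            ≤ ((n:ℝ) * (C*ρ)^2) * (2^(p:ℝ) * (u x ^(p:ℝ) + ε^(p:ℝ))) := by
          apply mul_le_mul (hSφ x) hb1 (Real.rpow_nonneg (hwpos x).le _)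
          positivity
        have hb3 : ((n:ℝ) * (C*ρ)^2) * (2^(p:ℝ) * (u x ^(p:ℝ) + ε^(p:ℝ)))
            = c1 * u x ^(p:ℝ) + c1 * ε^(p:ℝ) := by rw [hc1]; ring
        have hb4 : c1 * ε^(p:ℝ) ≤ c1 * ε := mul_le_mul_of_nonneg_left hεp hc10
        linarith
      · rw [Set.indicator_of_notMem hx, hsupp x hx, zero_mul, add_zero]
        have : 0 ≤ u x ^ (p:ℝ) := Real.rpow_nonneg (hupos x) _
        positivity
    have intRHS : Integrable (fun x => c1 * u x ^ (p:ℝ)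
        + Set.indicator (closedBall (0 : EuclideanSpace ℝ (Fin n)) (2*R))
            (fun _ => c1 * ε) x) := by
      apply (hLp.const_mul c1).add
      rw [integrable_indicator_iff measurableSet_closedBall]
      exact integrableOn_const measure_closedBall_lt_top.ne
    have hGb : (∫ x, gradSq φ x * (u x + ε)^(p:ℝ))
        ≤ c1 * I + c1 * ε * (volume (closedBall (0 : EuclideanSpace ℝ (Fin n)) (2*R))).toReal := by
      have := integral_mono intG intRHS hpt
      rwa [integral_add (hLp.const_mul c1) (by
          rw [integrable_indicator_iff measurableSet_closedBall]
          exact integrableOn_const measure_closedBall_lt_top.ne),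
        integral_const_mul, integral_indicator_const _ measurableSet_closedBall,
        smul_eq_mul, mul_comm (volume.real (closedBall _ _)) (c1 * ε), ← hI] at this
    -- volume of the big ball
    have hvol : (volume (closedBall (0 : EuclideanSpace ℝ (Fin n)) (2*R))).toReal
        = (2*R)^n * V₁ := by
      rw [MeasureTheory.Measure.addHaar_closedBall _ _ (by positivity : (0:ℝ) ≤ 2*R)]
      rw [ENNReal.toReal_mul, ENNReal.toReal_ofReal (by positivity), finrank_euclideanSpace_fin,
        hV₁]
    -- the arithmetic: everything is ≤ K * ρ
    have hεvol : ε * (2*R)^n = 2^n * ρ := by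
      rw [hεdef, hρ, mul_pow]
      have hRn : (R:ℝ)^n ≠ 0 := pow_ne_zero _ hR0.ne'
      field_simp
      rw [one_div, inv_pow, pow_succ', mul_comm R, mul_assoc, inv_mul_cancel₀ (mul_ne_zero hR0.ne' hRn)]
    have hGb2 : (∫ x, gradSq φ x * (u x + ε)^(p:ℝ)) ≤ A * (I + 2^n * V₁) * ρ := by
      have e1 : c1 = A * ρ^2 := by rw [hc1, hA]; ring
      have e2 : c1 * ε * ((2*R)^n * V₁) = A * ρ^2 * (2^n * ρ) * V₁ := by
        rw [e1, mul_assoc (A * ρ^2) ε _, ← mul_assoc ε _ _, hεvol]; ring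
      have hρ2 : ρ^2 ≤ ρ := by
        have h := mul_le_mul_of_nonneg_right hρ1 hρ0.le
        rwa [one_mul, ← sq] at h
      have hρ3 : ρ^2 * ρ ≤ ρ := by
        have h := mul_le_mul_of_nonneg_right hρ2 hρ0.le
        calc ρ^2 * ρ ≤ ρ * ρ := h
          _ = ρ^2 := (sq ρ).symm
          _ ≤ ρ := hρ2
      calc (∫ x, gradSq φ x * (u x + ε)^(p:ℝ))
          ≤ c1 * I + c1 * ε * ((2*R)^n * V₁) := by rw [← hvol]; linarith [hGb]
        _ = A * ρ^2 * I + A * (ρ^2 * ρ) * (2^n * V₁) := by rw [e2, e1]; ring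
        _ ≤ A * ρ * I + A * ρ * (2^n * V₁) := by
            have t1 : A * ρ^2 * I ≤ A * ρ * I :=
              mul_le_mul_of_nonneg_right (mul_le_mul_of_nonneg_left hρ2 hA0) hI0
            have t2 : A * (ρ^2 * ρ) * (2^n * V₁) ≤ A * ρ * (2^n * V₁) := by
              have h2n : (0:ℝ) ≤ 2^n * V₁ := by positivity
              exact mul_le_mul_of_nonneg_right (mul_le_mul_of_nonneg_left hρ3 hA0) h2n
            linarith
        _ = A * (I + 2^n * V₁) * ρ := by ring
    -- lower bound: the integral dominates c₀ * V
    have hone : ∀ x ∈ ball x₀ r, φ x = 1 := by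
      intro x hx
      apply χ.one_of_mem_closedBall
      have hxn : ‖x‖ ≤ R := by
        have hd' : dist x x₀ < r := mem_ball.mp hx
        calc ‖x‖ ≤ ‖x₀‖ + ‖x - x₀‖ := by
              have := norm_add_le x₀ (x - x₀); simpa using this
          _ ≤ ‖x₀‖ + r := by
              rw [← dist_eq_norm]
              linarith
          _ ≤ R := hRx
      simp only [mem_closedBall, dist_zero_right]
      rw [norm_smul, norm_inv, Real.norm_eq_abs, abs_of_pos hR0]
      rw [inv_mul_le_iff₀ hR0, mul_one]
      exact hxn
    have hlow : ∀ x ∈ ball x₀ r,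
        c₀ ≤ φ x ^ 2 * ((p - 1) * (u x + ε) ^ (p - 2) * gradSq u x) := by
      intro x hx
      have hd' : dist x x₀ < r := mem_ball.mp hx
      have hu1 : |u x - u x₀| < u x₀ / 2 := by
        have := h1 (lt_of_lt_of_le hd' (min_le_left _ _))
        rwa [Real.dist_eq] at this
      have hD1 : |pderiv u i x - pderiv u i x₀| < |pderiv u i x₀| / 2 := by
        have := h2 (lt_of_lt_of_le hd' (min_le_right _ _))
        rwa [Real.dist_eq] at this
      have hau : a ≤ u x + ε := by
        have : -(u x₀ / 2) < u x - u x₀ := neg_lt_of_abs_lt hu1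
        rw [ha]; linarith
      have hub : u x + ε ≤ b := by
        have : u x - u x₀ < u x₀ / 2 := lt_of_abs_lt hu1
        rw [hb]; linarith
      have hw2 : m ≤ (u x + ε) ^ (p - 2) := min_rpow_le ha0 hau hub
      have hDx : |pderiv u i x₀| / 2 ≤ |pderiv u i x| := by
        have habs := abs_sub_abs_le_abs_sub (pderiv u i x₀) (pderiv u i x)
        rw [abs_sub_comm] at habs
        linarith
      have hsq : d ≤ (pderiv u i x)^2 := by
        rw [hd, ← sq_abs (pderiv u i x)]
        apply pow_le_pow_left₀ (by positivity) hDx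
      have hSu : d ≤ gradSq u x := by
        refine hsq.trans ?_
        exact Finset.single_le_sum (f := fun j => (pderiv u j x)^2)
          (fun j _ => sq_nonneg _) (Finset.mem_univ i)
      rw [hone x hx, one_pow, one_mul, hc₀def]
      have hw2nn : 0 ≤ (u x + ε) ^ (p - 2) := Real.rpow_nonneg (hwpos x).le _
      calc (p-1) * m * d ≤ (p-1) * (u x + ε)^(p-2) * d :=
          mul_le_mul_of_nonneg_right (mul_le_mul_of_nonneg_left hw2 hp1.le) hd0.le
        _ ≤ (p-1) * (u x + ε)^(p-2) * gradSq u x :=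
          mul_le_mul_of_nonneg_left hSu (by positivity)
    -- integrability of the left integrand
    have cSu : Continuous (gradSq u) := continuous_finset_sum _ fun j _ =>
      ((contDiff_pderiv hu' j).continuous).pow 2
    have cwp2 : Continuous fun x => (u x + ε) ^ (p-2:ℝ) :=
      cw.rpow_const (fun x => Or.inl (hwpos x).ne')
    have intP : Integrable
        (fun x => φ x ^ 2 * ((p - 1) * (u x + ε) ^ (p - 2) * gradSq u x)) := by
      apply (((hφcd.continuous).pow 2).mul
        ((continuous_const.mul cwp2).mul cSu)).integrable_of_hasCompactSupport
      apply HasCompactSupport.intro hφc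
      intro x hx
      rw [Pi.mul_apply, Pi.pow_apply, image_eq_zero_of_notMem_tsupport hx]
      ring
    have hPnn : ∀ x, 0 ≤ φ x ^ 2 * ((p - 1) * (u x + ε) ^ (p - 2) * gradSq u x) := by
      intro x
      have h1' : 0 ≤ (u x + ε) ^ (p - 2) := Real.rpow_nonneg (hwpos x).le _
      have h2' : 0 ≤ gradSq u x := Finset.sum_nonneg fun j _ => sq_nonneg _
      positivity
    have hBlow : c₀ * V ≤ ∫ x, φ x ^ 2 * ((p - 1) * (u x + ε) ^ (p - 2) * gradSq u x) := by
      calc c₀ * V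
          ≤ ∫ x in ball x₀ r, φ x ^ 2 * ((p - 1) * (u x + ε) ^ (p - 2) * gradSq u x) := by
            rw [hV]
            exact setIntegral_ge_of_const_le_real measurableSet_ball measure_ball_lt_top.ne
              hlow intP.integrableOn
        _ ≤ ∫ x, φ x ^ 2 * ((p - 1) * (u x + ε) ^ (p - 2) * gradSq u x) :=
            setIntegral_le_integral intP (Filter.Eventually.of_forall hPnn)
    -- put everything together
    have hfinal : c₀ * V ≤ (4/(p-1)) * (A * (I + 2^n * V₁) * ρ) := by
      refine hBlow.trans (hcac.trans ?_)
      have h40 : (0:ℝ) ≤ 4/(p-1) := by positivity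
      exact mul_le_mul_of_nonneg_left hGb2 h40
    rw [hK]
    calc c₀ * V ≤ (4/(p-1)) * (A * (I + 2^n * V₁) * ρ) := hfinal
      _ = 4 / (p - 1) * (A * (I + 2 ^ n * V₁)) * ρ := by ring
  -- choose R large enough to get a contradiction
  set R : ℝ := max (‖x₀‖ + r) (max 1 (K / (c₀ * V) + 1)) with hR
  have hR1 : 1 ≤ R := le_trans (le_max_left _ _) (le_max_right _ _)
  have hRx : ‖x₀‖ + r ≤ R := le_max_left _ _
  have hRK : K / (c₀ * V) + 1 ≤ R := le_trans (le_max_right _ _) (le_max_right _ _)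
  have hR0 : 0 < R := lt_of_lt_of_le one_pos hR1
  have hcontr := main R hR1 hRx
  have hlt : K * R⁻¹ < c₀ * V := by
    have hcv : 0 < c₀ * V := by positivity
    have h1' : K < c₀ * V * R := by
      have h2' : c₀ * V * (K / (c₀ * V) + 1) = K + c₀ * V := by field_simp
      have h3' := mul_le_mul_of_nonneg_left hRK hcv.le
      rw [h2'] at h3'
      linarith
    calc K * R⁻¹ < (c₀ * V * R) * R⁻¹ :=
        mul_lt_mul_of_pos_right h1' (inv_pos.mpr hR0)
      _ = c₀ * V := by field_simp
  linarith [hcontr, hlt]
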